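/- arXiv:1803.05289 — 8 statements merged into one kernel-verified Lean document; each statement's English description precedes it below -/
import Mathlib

section
/- Let F be a field, a ∈ F an element of multiplicative order ℓ (a^ℓ = 1 and a^j ≠ 1 for all 0 < j < ℓ), t a natural number, and P ∈ F[X,Y] (a bivariate polynomial, MvPolynomial over Fin 2) homogeneous of degree t·ℓ. If P(aX, Y) = P(X, Y), i.e. substituting a·X for X leaves P unchanged, then there exists a bivariate polynomial R ∈ F[X,Y], homogeneous of degree t, such that P(X,Y) = R(X^ℓ, Y^ℓ). -/
/-!
Scaling `X 0` by `a` multiplies the coefficient of `X^d` by `a ^ d 0`, so invariance forces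
`a ^ d 0 = 1`, i.e. `ℓ ∣ d 0`, on the support of `P`; homogeneity of degree `t * ℓ` then gives
`ℓ ∣ d 1` as well. Hence `P` is the `ℓ`-fold expansion of some `R`, and `R` is homogeneous of
degree `t` because expansion multiplies every degree by `ℓ`.
-/

namespace MvPolynomial

variable {σ R : Type*}

section CommSemiring

variable [CommSemiring R]

theorem aeval_C_mul_X_monomial (c : σ → R) (e : σ →₀ ℕ) (r : R) :
    aeval (fun i => C (c i) * X i) (monomial e r) =
      monomial e ((e.prod fun i k => c i ^ k) * r) := by
  rw [aeval_monomial, Finsupp.prod_congr (g2 := fun i k => C (c i ^ k) * X i ^ k)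
    (fun i _ => by rw [mul_pow, C_pow]), Finsupp.prod_mul, ← map_finsuppProd C, algebraMap_eq,
    ← mul_assoc, ← C_mul, monomial_eq, mul_comm r]

theorem coeff_aeval_C_mul_X (c : σ → R) (P : MvPolynomial σ R) (d : σ →₀ ℕ) :
    coeff d (aeval (fun i => C (c i) * X i) P) = (d.prod fun i k => c i ^ k) * coeff d P := by
  classical
  induction P using induction_on' with
  | monomial e r =>
    rw [aeval_C_mul_X_monomial, coeff_monomial, coeff_monomial]
    split_ifs with h
    · rw [h]
    · rw [mul_zero]
  | add p q hp hq => rw [map_add, coeff_add, coeff_add, hp, hq, mul_add]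

theorem isHomogeneous_of_isHomogeneous_expand {ℓ n : ℕ} (hℓ : 0 < ℓ) {Q : MvPolynomial σ R}
    (h : (expand ℓ Q).IsHomogeneous (n * ℓ)) : Q.IsHomogeneous n := by
  intro m hm
  have := h (d := ℓ • m) (by rwa [coeff_expand_smul _ hℓ.ne'])
  rw [map_nsmul, smul_eq_mul, mul_comm] at this
  exact Nat.eq_of_mul_eq_mul_right hℓ this

theorem exists_expand_eq_of_forall_dvd {ℓ : ℕ} {P : MvPolynomial σ R}
    (h : ∀ d ∈ P.support, ∀ i, ℓ ∣ d i) : ∃ Q, expand ℓ Q = P := by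
  refine ⟨∑ d ∈ P.support, monomial (d.mapRange (· / ℓ) (Nat.zero_div ℓ)) (coeff d P), ?_⟩
  conv_rhs => rw [P.as_sum]
  rw [map_sum]
  refine Finset.sum_congr rfl fun d hd => ?_
  have hd' : ℓ • d.mapRange (· / ℓ) (Nat.zero_div ℓ) = d :=
    Finsupp.ext fun i => Nat.mul_div_cancel' (h d hd i)
  rw [expand_monomial, hd']

end CommSemiring

theorem prod_pow_eq_one_of_aeval_C_mul_X_eq_self [CommRing R] [IsDomain R] {c : σ → R}
    {P : MvPolynomial σ R} (hP : aeval (fun i => C (c i) * X i) P = P) {d : σ →₀ ℕ}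
    (hd : d ∈ P.support) : (d.prod fun i k => c i ^ k) = 1 := by
  have := congrArg (coeff d) hP
  rwa [coeff_aeval_C_mul_X, mul_eq_right₀ (mem_support_iff.mp hd)] at this

end MvPolynomial

open MvPolynomial

/-- If a bivariate homogeneous polynomial `P` of degree `t·ℓ` satisfies
`P(aX, Y) = P(X, Y)` where `a` has multiplicative order `ℓ`, then
`P(X, Y) = R(X^ℓ, Y^ℓ)` for some homogeneous `R` of degree `t`. -/
theorem homogeneous_invariant_eq_comp_pow {F : Type*} [Field F] (a : F)
    (ℓ : ℕ) (hℓ : 0 < ℓ) (ha1 : a ^ ℓ = 1)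
    (ha2 : ∀ j : ℕ, 0 < j → j < ℓ → a ^ j ≠ 1)
    (t : ℕ) (P : MvPolynomial (Fin 2) F) (hP : P.IsHomogeneous (t * ℓ))
    (hinv : aeval ![C a * X 0, X 1] P = P) :
    ∃ R : MvPolynomial (Fin 2) F, R.IsHomogeneous t ∧
      P = aeval ![X 0 ^ ℓ, X 1 ^ ℓ] R := by
  have hord : orderOf a = ℓ := (orderOf_eq_iff hℓ).2 ⟨ha1, fun j hj h0 => ha2 j h0 hj⟩
  have hscale : ![C a * X 0, X 1] = fun i => C (![a, 1] i) * X i := by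
    ext1 i; fin_cases i <;> simp
  have hdvd : ∀ d ∈ P.support, ∀ i, ℓ ∣ d i := by
    intro d hd
    have hpow : a ^ d 0 = 1 := by
      have := prod_pow_eq_one_of_aeval_C_mul_X_eq_self (c := ![a, 1]) (hscale ▸ hinv) hd
      simpa [Finsupp.prod_fintype] using this
    have hdvd0 : ℓ ∣ d 0 := hord ▸ orderOf_dvd_of_pow_eq_one hpow
    have hdeg : d 0 + d 1 = t * ℓ := by
      simpa [Finsupp.weight_apply, Finsupp.sum_fintype] using hP (mem_support_iff.mp hd)
    intro i
    fin_cases i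
    exacts [hdvd0, (Nat.dvd_add_right hdvd0).1 (hdeg ▸ dvd_mul_left ℓ t)]
  obtain ⟨R, rfl⟩ := exists_expand_eq_of_forall_dvd hdvd
  refine ⟨R, isHomogeneous_of_isHomogeneous_expand hℓ hP, ?_⟩
  have hpow : ![X 0 ^ ℓ, X 1 ^ ℓ] = fun i => (X i : MvPolynomial (Fin 2) F) ^ ℓ := by
    ext1 i; fin_cases i <;> rfl
  rw [hpow, aeval_eq_bind₁]
  rfl
end

section
/- Let F be a field of prime characteristic p, b ∈ F a nonzero element, t a natural number, and f ∈ F[X] a polynomial with natDegree(f) ≤ t·p satisfying f(X + b) = f(X), i.e. f.comp(X + C b) = f. Then there exists R ∈ F[X] with natDegree(R) ≤ t such that f = R.comp(X^p − C(b^{p−1})·X). -/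
/-!
Translation by `b` is a ring automorphism of `F[X]` fixing the monic polynomial
`q = X ^ p - b ^ (p - 1) * X`, because `(X + b) ^ p = X ^ p + b ^ p`. Hence it fixes the quotient
and the remainder of an invariant `f` upon division by `q`. The remainder has degree `< p` and
takes the same value at the `p` distinct points `k * b`, so it is constant; induction on `t`
applied to the quotient expands `f` in base `q` with constant digits.
-/

open Polynomial Finset

namespace Polynomial

section CommRing

variable {R : Type*} [CommRing R] {b : R}

theorem eval_natCast_mul_of_comp_X_add_C_eq_self {f : R[X]} (hf : f.comp (X + C b) = f) (n : ℕ) :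
    f.eval (n * b) = f.eval 0 := by
  have hstep (x : R) : f.eval (x + b) = f.eval x := by
    conv_rhs => rw [← hf]
    simp
  induction n with
  | zero => simp
  | succ n ih => rw [Nat.cast_succ, add_one_mul, hstep, ih]

theorem X_pow_sub_C_pow_pred_mul_X_comp_X_add_C (p : ℕ) [ExpChar R p] (b : R) :
    (X ^ p - C (b ^ (p - 1)) * X : R[X]).comp (X + C b) = X ^ p - C (b ^ (p - 1)) * X := by
  have hb : b ^ (p - 1) * b = b ^ p := by
    rw [← pow_succ, Nat.sub_add_cancel (expChar_pos R p)]
  rw [sub_comp, mul_comp, X_pow_comp, X_comp, C_comp, add_pow_expChar, ← C_pow, ← hb, C_mul]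
  ring

theorem comp_X_add_C_divByMonic_and_modByMonic [Nontrivial R] (f : R[X]) {q : R[X]} (hq : q.Monic) :
    f.comp (X + C b) /ₘ q.comp (X + C b) = (f /ₘ q).comp (X + C b) ∧
      f.comp (X + C b) %ₘ q.comp (X + C b) = (f %ₘ q).comp (X + C b) := by
  refine div_modByMonic_unique _ _ (hq.comp (monic_X_add_C b) (by simp)) ⟨?_, ?_⟩
  · rw [← mul_comp, ← add_comp, modByMonic_add_div]
  · simp only [← taylor_apply, degree_taylor]
    exact degree_modByMonic_lt f hq

end CommRing

theorem monic_X_pow_sub_C_mul_X {R : Type*} [Ring R] {n : ℕ} (hn : 1 < n) (a : R) :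
    (X ^ n - C a * X : R[X]).Monic :=
  monic_X_pow_sub <| degree_C_mul_X_le a |>.trans_lt <| by exact_mod_cast hn

theorem natDegree_X_pow_sub_C_mul_X {R : Type*} [Ring R] [Nontrivial R] {n : ℕ} (hn : 1 < n)
    (a : R) :
    (X ^ n - C a * X : R[X]).natDegree = n := by
  rw [natDegree_sub_eq_left_of_natDegree_lt] <;> rw [natDegree_X_pow]
  exact (natDegree_le_of_degree_le (degree_C_mul_X_le a)).trans_lt hn

section IsDomain

variable {R : Type*} [CommRing R] [IsDomain R] {p : ℕ} [CharP R p] {b : R}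

theorem eq_C_eval_zero_of_comp_X_add_C_eq_self (hb : b ≠ 0) {f : R[X]}
    (hf : f.comp (X + C b) = f) (hdeg : f.natDegree < p) : f = C (f.eval 0) := by
  refine sub_eq_zero.mp <| eq_zero_of_degree_lt_of_eval_index_eq_zero (range p)
    (v := fun k : ℕ => k * b) ?_ ?_ ?_
  · intro k hk l hl hkl
    exact CharP.natCast_injOn_Iio R p (by simpa using hk) (by simpa using hl)
      (mul_right_cancel₀ hb hkl)
  · rw [card_range]
    exact degree_le_natDegree.trans_lt (by rw [natDegree_sub_C]; exact_mod_cast hdeg)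
  · intro k _
    simp [eval_natCast_mul_of_comp_X_add_C_eq_self hf]

theorem exists_eq_comp_of_comp_X_add_C_eq_self (hp : 0 < p) (hb : b ≠ 0) {q : R[X]}
    (hq : q.Monic) (hqdeg : q.natDegree = p) (hqinv : q.comp (X + C b) = q) {t : ℕ} {f : R[X]}
    (hdeg : f.natDegree ≤ t * p) (hf : f.comp (X + C b) = f) :
    ∃ g : R[X], g.natDegree ≤ t ∧ f = g.comp q := by
  induction t generalizing f with
  | zero =>
    refine ⟨C (f.coeff 0), by simp, ?_⟩
    rw [C_comp]
    exact eq_C_of_natDegree_le_zero (by simpa using hdeg)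
  | succ t ih =>
    obtain ⟨hdiv, hmod⟩ := comp_X_add_C_divByMonic_and_modByMonic (b := b) f hq
    rw [hf, hqinv] at hdiv hmod
    have hq1 : q ≠ 1 := by rintro rfl; simp at hqdeg; omega
    obtain ⟨g, hg, hgq⟩ := ih (f := f /ₘ q)
      (by rw [natDegree_divByMonic f hq, hqdeg]; rw [add_one_mul] at hdeg; omega) hdiv.symm
    have hr := eq_C_eval_zero_of_comp_X_add_C_eq_self hb hmod.symm
      (hqdeg ▸ natDegree_modByMonic_lt f hq hq1)
    refine ⟨g * X + C ((f %ₘ q).eval 0), ?_, ?_⟩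
    · rw [natDegree_add_C]
      exact natDegree_mul_le.trans (by simp; omega)
    · rw [add_comp, mul_comp, X_comp, C_comp, ← hgq, ← hr]
      linear_combination (modByMonic_add_div f q).symm

end IsDomain

end Polynomial

/-- If `F` has prime characteristic `p`, `b ≠ 0` and `f ∈ F[X]` of degree at
most `t·p` satisfies `f(X + b) = f(X)`, then `f = R(X^p - b^{p-1}X)` for some
`R` of degree at most `t`. -/
theorem translation_invariant_poly_eq_comp {F : Type*} [Field F] (p : ℕ)
    [Fact p.Prime] [CharP F p] (b : F) (hb : b ≠ 0) (t : ℕ) (f : F[X])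
    (hdeg : f.natDegree ≤ t * p) (hf : f.comp (X + C b) = f) :
    ∃ R : F[X], R.natDegree ≤ t ∧
      f = R.comp (X ^ p - C (b ^ (p - 1)) * X) := by
  have hp : 1 < p := Fact.out (p := p.Prime) |>.one_lt
  exact exists_eq_comp_of_comp_X_add_C_eq_self (by omega) hb (monic_X_pow_sub_C_mul_X hp _)
    (natDegree_X_pow_sub_C_mul_X hp _) (X_pow_sub_C_pow_pred_mul_X_comp_X_add_C p b) hdeg hf
end

section
/- Let F be a field of prime characteristic p and b, c ∈ F. Then in F[X] one has the identity ∏_{j=0}^{p−1} (X − C(c + j·b)) = X^p − C(b^{p−1})·X − C(c^p − b^{p−1}·c), where j·b denotes the natural-number scalar multiple of b. -/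
open Polynomial

private theorem zmod_prod_aux (p : ℕ) [Fact p.Prime] :
    ∏ a : ZMod p, (X - C a) = X ^ p - X := by
  have hq : Fintype.card (ZMod p) = p := ZMod.card p
  have hp1 : 1 < p := (Fact.out : p.Prime).one_lt
  have hdeg : (X ^ p - X : (ZMod p)[X]).natDegree = p :=
    FiniteField.X_pow_card_sub_X_natDegree_eq _ hp1
  have hroots : roots (X ^ p - X : (ZMod p)[X]) = Finset.univ.val := by
    have := FiniteField.roots_X_pow_card_sub_X (ZMod p)
    rwa [hq] at this
  have hmonic : (X ^ p - X : (ZMod p)[X]).Monic := by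
    apply monic_X_pow_sub
    rw [degree_X]
    exact_mod_cast hp1
  have := prod_multiset_X_sub_C_of_monic_of_roots_card_eq hmonic
    (by rw [hroots, hdeg]; simp [hq])
  rw [hroots] at this
  rw [← this]
  rfl

private theorem range_prod_aux {F : Type*} [Field F] (p : ℕ)
    [Fact p.Prime] [CharP F p] :
    ∏ j ∈ Finset.range p, (X - C ((j : F))) = X ^ p - X := by
  have hp0 : 0 < p := (Fact.out : p.Prime).pos
  let f : ZMod p →+* F := ZMod.castHom dvd_rfl F
  have h := congrArg (Polynomial.map f) (zmod_prod_aux p)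
  simp only [Polynomial.map_prod, Polynomial.map_sub, Polynomial.map_pow,
    Polynomial.map_X, Polynomial.map_C] at h
  have key : ∏ j ∈ Finset.range p, (X - C ((j : F))) = ∏ a : ZMod p, (X - C (f a)) := by
    refine Finset.prod_nbij' (fun j : ℕ => ((j : ZMod p))) (fun a : ZMod p => a.val)
      (fun j _ => Finset.mem_univ _) (fun a _ => Finset.mem_range.mpr (ZMod.val_lt a))
      (fun j hj => ZMod.val_cast_of_lt (Finset.mem_range.mp hj))
      (fun a _ => ZMod.natCast_zmod_val a) (fun j _ => ?_)
    rw [map_natCast f]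
  rw [key, h]

/-- In characteristic `p`, `∏_{j=0}^{p-1} (X - (c + j·b)) =
X^p - b^{p-1}·X - (c^p - b^{p-1}·c)`. -/
theorem prod_X_sub_orbit_translation {F : Type*} [Field F] (p : ℕ)
    [Fact p.Prime] [CharP F p] (b c : F) :
    ∏ j ∈ Finset.range p, (X - C (c + j • b)) =
      X ^ p - C (b ^ (p - 1)) * X - C (c ^ p - b ^ (p - 1) * c) := by
  have hp1 : 1 < p := (Fact.out : p.Prime).one_lt
  rcases eq_or_ne b 0 with hb | hb
  · subst hb
    have h0 : (0 : F) ^ (p - 1) = 0 := zero_pow (by omega)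
    simp only [smul_zero, add_zero, h0, map_zero, zero_mul, sub_zero, mul_zero]
    rw [Finset.prod_const, Finset.card_range, sub_pow_char _ _, ← C_pow]
  · set Y : F[X] := C b⁻¹ * (X - C c) with hY
    have hterm : ∀ j ∈ Finset.range p, X - C (c + j • b) = C b * (Y - C ((j : F))) := by
      intro j _
      rw [hY, mul_sub, ← mul_assoc, ← C_mul, mul_inv_cancel₀ hb, C_1, one_mul, ← C_mul,
        nsmul_eq_mul]
      ring_nf
      rw [map_add, map_mul]
      ring
    rw [Finset.prod_congr rfl hterm, Finset.prod_mul_distrib, Finset.prod_const,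
      Finset.card_range]
    have h2 : ∏ j ∈ Finset.range p, (Y - C ((j : F))) = Y ^ p - Y := by
      have h := congrArg (aeval Y) (range_prod_aux (F := F) p)
      simpa using h
    rw [h2, hY, mul_pow, ← C_pow, ← C_pow,
      sub_pow_char _ _, ← C_pow]
    have e1 : b ^ p * b⁻¹ ^ p = 1 := by
      rw [← mul_pow, mul_inv_cancel₀ hb, one_pow]
    have e2 : b ^ p * b⁻¹ = b ^ (p - 1) := by
      rw [← pow_sub_one_mul (by omega : p ≠ 0) b]
      field_simp
    rw [mul_sub, ← mul_assoc, ← mul_assoc, ← C_mul, ← C_mul, e1, e2, C_1, one_mul, map_sub (C : F →+* F[X]) (c^p), C_mul]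
    ring
end

section
/- Let F be a field, a ∈ F an element of multiplicative order ℓ (a^ℓ = 1 and a^j ≠ 1 for all 0 < j < ℓ), s, t natural numbers with t < s, and x : Fin s → F such that the map (i,j) ↦ a^j · (x i) from Fin s × Fin ℓ to F is injective. Then the following two subsets of (Fin s → F) are equal: { v | ∃ f ∈ F[X], natDegree(f) ≤ t·ℓ and f(a^j · x i) = v i for all i ∈ Fin s, j ∈ Fin ℓ } = { v | ∃ g ∈ F[X], natDegree(g) ≤ t and v i = g((x i)^ℓ) for all i ∈ Fin s }. -/
/-!
If `f` has degree `≤ t ℓ` and is constant on each of the `s` orbits, then `f(aX) - f` vanishes at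
all `s ℓ > t ℓ` points of the support, so `f(aX) = f`. Comparing coefficients, `aⁿ fₙ = fₙ`, and
as `a` has order `ℓ` only the coefficients `fₙ` with `ℓ ∣ n` survive: `f = g(X^ℓ)` with
`deg g ≤ t`. Conversely `g(X^ℓ)` is constant on every orbit because `a^ℓ = 1`.
-/

open Polynomial

namespace Polynomial

variable {R : Type*} [CommRing R]

theorem expand_contract_of_coeff_eq_zero {p : ℕ} (hp : p ≠ 0) {f : R[X]}
    (hf : ∀ n, ¬ p ∣ n → f.coeff n = 0) : expand R p (contract p f) = f := by
  ext n
  rw [coeff_expand hp.bot_lt, coeff_contract hp]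
  split_ifs with h
  · rw [Nat.div_mul_cancel h]
  · exact (hf n h).symm

theorem natDegree_contract_le {p : ℕ} (hp : p ≠ 0) (f : R[X]) :
    (contract p f).natDegree ≤ f.natDegree / p := by
  refine natDegree_le_iff_coeff_eq_zero.mpr fun n hn => ?_
  rw [coeff_contract hp]
  exact coeff_eq_zero_of_natDegree_lt ((Nat.div_lt_iff_lt_mul hp.bot_lt).mp (mod_cast hn))

theorem natDegree_comp_C_mul_X_le (f : R[X]) (r : R) :
    (f.comp (C r * X)).natDegree ≤ f.natDegree :=
  natDegree_le_iff_coeff_eq_zero.mpr fun n hn => by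
    rw [comp_C_mul_X_coeff, coeff_eq_zero_of_natDegree_lt (mod_cast hn), zero_mul]

variable [IsDomain R]

theorem coeff_eq_zero_of_comp_C_mul_X_eq_self {r : R} {f : R[X]} (h : f.comp (C r * X) = f)
    {n : ℕ} (hn : ¬ orderOf r ∣ n) : f.coeff n = 0 := by
  have hcoeff : f.coeff n * r ^ n = f.coeff n := by rw [← comp_C_mul_X_coeff, h]
  exact (mul_right_eq_self₀.mp hcoeff).resolve_left (mt orderOf_dvd_of_pow_eq_one hn)

theorem comp_C_mul_X_eq_self_of_eval_mul_eq {r : R} {f : R[X]} {ι : Type*} [Fintype ι]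
    {z : ι → R} (hz : Function.Injective z) (hf : ∀ i, f.eval (r * z i) = f.eval (z i))
    (hdeg : f.natDegree < Fintype.card ι) : f.comp (C r * X) = f :=
  eq_of_natDegree_lt_card_of_eval_eq _ _ hz (by simpa using hf)
    (max_lt ((natDegree_comp_C_mul_X_le f r).trans_lt hdeg) hdeg)

end Polynomial

/-- The punctured invariant subcode of the quasi-cyclic evaluation code (orbits
under `z ↦ a·z`) is the evaluation code on the support `i ↦ (x i)^ℓ`. -/
theorem invariant_evaluation_code_homothety {F : Type*} [Field F] (a : F)
    (ℓ : ℕ) (hℓ : 0 < ℓ) (ha1 : a ^ ℓ = 1)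
    (ha2 : ∀ j : ℕ, 0 < j → j < ℓ → a ^ j ≠ 1) (s t : ℕ) (hts : t < s)
    (x : Fin s → F)
    (hinj : Function.Injective fun p : Fin s × Fin ℓ => a ^ (p.2 : ℕ) * x p.1) :
    {v : Fin s → F | ∃ f : F[X], f.natDegree ≤ t * ℓ ∧
        ∀ (i : Fin s) (j : Fin ℓ), f.eval (a ^ (j : ℕ) * x i) = v i} =
      {v : Fin s → F | ∃ g : F[X], g.natDegree ≤ t ∧
        ∀ i : Fin s, v i = g.eval (x i ^ ℓ)} := by
  have hord : orderOf a = ℓ :=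
    (orderOf_eq_iff hℓ).mpr ⟨ha1, fun j hj hj0 => ha2 j hj0 hj⟩
  ext v
  constructor
  · rintro ⟨f, hdeg, hf⟩
    have hv : ∀ i, v i = f.eval (x i) := fun i => by simpa using (hf i ⟨0, hℓ⟩).symm
    have hshift : ∀ p : Fin s × Fin ℓ,
        f.eval (a * (a ^ (p.2 : ℕ) * x p.1)) = f.eval (a ^ (p.2 : ℕ) * x p.1) := by
      rintro ⟨i, j⟩
      have hrot : a * a ^ (j : ℕ) = a ^ ((j + 1) % ℓ) := by
        rw [← pow_succ', ← pow_mod_orderOf, hord]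
      rw [← mul_assoc, hrot, hf i ⟨_, Nat.mod_lt _ hℓ⟩, hf i j]
    have hcard : f.natDegree < Fintype.card (Fin s × Fin ℓ) := by
      rw [Fintype.card_prod, Fintype.card_fin, Fintype.card_fin]
      exact hdeg.trans_lt ((Nat.mul_lt_mul_right hℓ).mpr hts)
    have hinv : f.comp (C a * X) = f := comp_C_mul_X_eq_self_of_eval_mul_eq hinj hshift hcard
    have hexpand : expand F ℓ (contract ℓ f) = f :=
      expand_contract_of_coeff_eq_zero hℓ.ne' fun n hn =>
        coeff_eq_zero_of_comp_C_mul_X_eq_self hinv (hord ▸ hn)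
    have hdeg' : (contract ℓ f).natDegree ≤ t :=
      (natDegree_contract_le hℓ.ne' f).trans (Nat.div_le_of_le_mul (hdeg.trans_eq (mul_comm t ℓ)))
    exact ⟨contract ℓ f, hdeg', fun i => by rw [hv, ← expand_eval, hexpand]⟩
  · rintro ⟨g, hdeg, hg⟩
    refine ⟨expand F ℓ g, (natDegree_expand ℓ g).trans_le (Nat.mul_le_mul_right ℓ hdeg),
      fun i j => ?_⟩
    rw [expand_eval, mul_pow, ← pow_mul, mul_comm (j : ℕ) ℓ, pow_mul, ha1, one_pow, one_mul, hg]
end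

section
/- Let F be a field, a ∈ F an element of multiplicative order ℓ (a^ℓ = 1 and a^j ≠ 1 for all 0 < j < ℓ), s, t natural numbers with t < s, x : Fin s → F such that the map (i,j) ↦ a^j · (x i) from Fin s × Fin ℓ to F is injective, and q ∈ F with (x i)^ℓ ≠ q^ℓ for all i. Then the following two subsets of (Fin s → F) are equal: { v | ∃ f ∈ F[X], natDegree(f) ≤ t·ℓ and f(a^j · x i) / ((x i)^ℓ − q^ℓ)^t = v i for all i ∈ Fin s, j ∈ Fin ℓ } = { v | ∃ g ∈ F[X], natDegree(g) ≤ t and v i = g((x i)^ℓ) / ((x i)^ℓ − q^ℓ)^t for all i ∈ Fin s }. -/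
/-!
Averaging over an orbit: for a primitive `ℓ`-th root of unity `a`, the sum `∑_{j<ℓ} a^{jm}`
is `ℓ` when `ℓ ∣ m` and `0` otherwise, so `∑_{j<ℓ} f(a^j y) = ℓ · (contract ℓ f)(y^ℓ)`, and `ℓ` is
invertible in `F` because `F` contains such a root. Hence a polynomial that takes one value
on an orbit takes the value of `contract ℓ f` at `y^ℓ` there; conversely `g(X^ℓ)` is constant on
every orbit.
-/

open Polynomial Finset

theorem Polynomial.contract_monomial {R : Type*} [CommSemiring R] {p : ℕ} (hp : p ≠ 0) (m : ℕ)
    (c : R) : contract p (monomial m c) = if p ∣ m then monomial (m / p) c else 0 := by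
  ext k
  rw [coeff_contract hp]
  split_ifs with hpm
  · obtain ⟨d, rfl⟩ := hpm
    simp only [coeff_monomial, mul_comm p d, Nat.mul_left_inj hp,
      Nat.mul_div_cancel d (Nat.pos_of_ne_zero hp)]
  · rw [coeff_monomial, if_neg (fun h => hpm ⟨k, by rw [h, mul_comm]⟩), coeff_zero]

theorem Polynomial.natDegree_contract_le_s12 {R : Type*} [CommSemiring R] {p : ℕ} (hp : p ≠ 0)
    (f : R[X]) : (contract p f).natDegree ≤ f.natDegree / p :=
  natDegree_le_iff_coeff_eq_zero.2 fun n hn => by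
    rw [coeff_contract hp]
    exact coeff_eq_zero_of_natDegree_lt
      ((Nat.div_lt_iff_lt_mul (Nat.pos_of_ne_zero hp)).1 (by exact_mod_cast hn))

namespace IsPrimitiveRoot

variable {R : Type*} [CommRing R] {ζ : R} {n : ℕ}

theorem geom_sum_pow [NoZeroDivisors R] (h : IsPrimitiveRoot ζ n) (m : ℕ) :
    ∑ j ∈ range n, (ζ ^ m) ^ j = if n ∣ m then (n : R) else 0 := by
  split_ifs with hnm
  · simp [(h.pow_eq_one_iff_dvd m).2 hnm]
  · have hgeom := mul_geom_sum (ζ ^ m) n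
    rw [pow_right_comm, h.pow_eq_one, one_pow, sub_self] at hgeom
    exact (mul_eq_zero.1 hgeom).resolve_left
      (sub_ne_zero.2 (mt (h.pow_eq_one_iff_dvd m).1 hnm))

theorem sum_eval_mul_pow [NoZeroDivisors R] (h : IsPrimitiveRoot ζ n) (f : R[X]) (y : R) :
    ∑ j ∈ range n, f.eval (ζ ^ j * y) = n * (contract n f).eval (y ^ n) := by
  rcases eq_or_ne n 0 with rfl | hn
  · simp
  induction f using Polynomial.induction_on' with
  | add f g hf hg => simp only [eval_add, sum_add_distrib, contract_add hn, hf, hg, mul_add]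
  | monomial m c =>
    calc ∑ j ∈ range n, (monomial m c).eval (ζ ^ j * y)
        = c * y ^ m * ∑ j ∈ range n, (ζ ^ m) ^ j := by
          simp only [eval_monomial, mul_sum, mul_pow, pow_right_comm ζ]
          exact sum_congr rfl fun _ _ => by ring
      _ = n * (contract n (monomial m c)).eval (y ^ n) := by
          rw [h.geom_sum_pow, contract_monomial hn]
          split_ifs with hnm
          · obtain ⟨d, rfl⟩ := hnm
            rw [eval_monomial, Nat.mul_div_cancel_left d (Nat.pos_of_ne_zero hn), ← pow_mul]
            ring
          · simp

end IsPrimitiveRoot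

theorem invariant_GRS_code_homothety_general {F : Type*} [Field F] (a : F)
    (ℓ : ℕ) (hℓ : 0 < ℓ) (ha1 : a ^ ℓ = 1)
    (ha2 : ∀ j : ℕ, 0 < j → j < ℓ → a ^ j ≠ 1) (s t : ℕ)
    (x : Fin s → F)
    (q : F) :
    {v : Fin s → F | ∃ f : F[X], f.natDegree ≤ t * ℓ ∧
        ∀ (i : Fin s) (j : Fin ℓ),
          f.eval (a ^ (j : ℕ) * x i) / (x i ^ ℓ - q ^ ℓ) ^ t = v i} =
      {v : Fin s → F | ∃ g : F[X], g.natDegree ≤ t ∧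
        ∀ i : Fin s, v i = g.eval (x i ^ ℓ) / (x i ^ ℓ - q ^ ℓ) ^ t} := by
  have ha : IsPrimitiveRoot a ℓ := .mk_of_lt a hℓ ha1 ha2
  have : NeZero ℓ := ⟨hℓ.ne'⟩
  have hℓF : (ℓ : F) ≠ 0 := ha.neZero'.out
  ext v
  constructor
  · rintro ⟨f, hf, hv⟩
    refine ⟨contract ℓ f, (natDegree_contract_le_s12 hℓ.ne' f).trans
      (Nat.div_le_of_le_mul (by rwa [mul_comm])), fun i => mul_left_cancel₀ hℓF ?_⟩
    calc (ℓ : F) * v i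
        = ∑ j ∈ range ℓ, f.eval (a ^ j * x i) / (x i ^ ℓ - q ^ ℓ) ^ t := by
          rw [sum_congr rfl fun j hj => hv i ⟨j, mem_range.1 hj⟩, sum_const, card_range,
            nsmul_eq_mul]
      _ = ℓ * ((contract ℓ f).eval (x i ^ ℓ) / (x i ^ ℓ - q ^ ℓ) ^ t) := by
          rw [← sum_div, ha.sum_eval_mul_pow, mul_div_assoc]
  · rintro ⟨g, hg, hv⟩
    refine ⟨expand F ℓ g, by rw [natDegree_expand]; exact Nat.mul_le_mul_right ℓ hg,
      fun i j => ?_⟩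
    rw [hv i, expand_eval, mul_pow, pow_right_comm, ha1, one_pow, one_mul]

/-- The punctured invariant subcode of the quasi-cyclic GRS code (orbits under
`z ↦ a·z`, divisor on the orbit of `q`) is the GRS code with support
`i ↦ (x i)^ℓ` and multiplier `i ↦ ((x i)^ℓ - q^ℓ)⁻ᵗ`. -/
theorem invariant_GRS_code_homothety {F : Type*} [Field F] (a : F)
    (ℓ : ℕ) (hℓ : 0 < ℓ) (ha1 : a ^ ℓ = 1)
    (ha2 : ∀ j : ℕ, 0 < j → j < ℓ → a ^ j ≠ 1) (s t : ℕ) (hts : t < s)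
    (x : Fin s → F)
    (hinj : Function.Injective fun p : Fin s × Fin ℓ => a ^ (p.2 : ℕ) * x p.1)
    (q : F) (hq : ∀ i : Fin s, x i ^ ℓ ≠ q ^ ℓ) :
    {v : Fin s → F | ∃ f : F[X], f.natDegree ≤ t * ℓ ∧
        ∀ (i : Fin s) (j : Fin ℓ),
          f.eval (a ^ (j : ℕ) * x i) / (x i ^ ℓ - q ^ ℓ) ^ t = v i} =
      {v : Fin s → F | ∃ g : F[X], g.natDegree ≤ t ∧
        ∀ i : Fin s, v i = g.eval (x i ^ ℓ) / (x i ^ ℓ - q ^ ℓ) ^ t} :=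
  invariant_GRS_code_homothety_general a ℓ hℓ ha1 ha2 s t x q
end

section
/- Let F be a field of prime characteristic p, b ∈ F nonzero, s, t natural numbers with t < s, and x : Fin s → F such that the map (i,j) ↦ (x i) + j·b from Fin s × Fin p to F is injective (j·b the natural-number scalar multiple). Then the following two subsets of (Fin s → F) are equal: { v | ∃ f ∈ F[X], natDegree(f) ≤ t·p and f(x i + j·b) = v i for all i ∈ Fin s, j ∈ Fin p } = { v | ∃ g ∈ F[X], natDegree(g) ≤ t and v i = g((x i)^p − b^{p−1}·(x i)) for all i ∈ Fin s }. -/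
open Polynomial

section Aux

variable {F : Type*} [Field F] (p : ℕ) [Fact p.Prime] [CharP F p]

lemma aux_fermat_cast (j : ℕ) : (j : F) ^ p = (j : F) := by
  have h : ((j : ZMod p) ^ p) = (j : ZMod p) := ZMod.pow_card _
  calc (j : F) ^ p = (ZMod.castHom (dvd_refl p) F ((j : ZMod p))) ^ p := by
        rw [map_natCast]
    _ = ZMod.castHom (dvd_refl p) F ((j : ZMod p) ^ p) := by rw [map_pow]
    _ = ZMod.castHom (dvd_refl p) F ((j : ZMod p)) := by rw [h]
    _ = (j : F) := by rw [map_natCast]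

lemma aux_pow_eval (b z : F) (j : ℕ) :
    (z + (j : ℕ) • b) ^ p - b ^ (p - 1) * (z + (j : ℕ) • b)
      = z ^ p - b ^ (p - 1) * z := by
  have hp1 : 1 ≤ p := (Fact.out : p.Prime).one_lt.le
  have hbp : b ^ p = b ^ (p - 1) * b := by
    rw [← pow_succ, Nat.sub_add_cancel hp1]
  rw [nsmul_eq_mul, add_pow_char, mul_pow, aux_fermat_cast p, hbp]
  ring

lemma aux_natDegree (b : F) :
    (X ^ p - C (b ^ (p - 1)) * X : F[X]).natDegree = p := by
  have h2 : 2 ≤ p := (Fact.out : p.Prime).two_le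
  have h1 : (C (b ^ (p - 1)) * X : F[X]).natDegree < (X ^ p : F[X]).natDegree := by
    rw [natDegree_X_pow]
    exact lt_of_le_of_lt (natDegree_C_mul_le _ _) (by simp; omega)
  rw [natDegree_sub_eq_left_of_natDegree_lt h1, natDegree_X_pow]

lemma aux_pi_ne_zero (b : F) : (X ^ p - C (b ^ (p - 1)) * X : F[X]) ≠ 0 := by
  intro h
  have h2 := aux_natDegree p b
  rw [h, natDegree_zero] at h2
  exact absurd h2.symm (Fact.out : p.Prime).pos.ne'

lemma aux_cast_inj {a c : ℕ} (ha : a < p) (hc : c < p) (h : (a : F) = (c : F)) :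
    a = c := by
  exact CharP.natCast_injOn_Iio F p ha hc h

lemma aux_root (b : F) (hb : b ≠ 0) {d : F} (hd : d ^ p = b ^ (p - 1) * d) :
    ∃ j : Fin p, d = (j : ℕ) • b := by
  by_contra hcon
  push_neg at hcon
  set P : F[X] := X ^ p - C (b ^ (p - 1)) * X with hP
  have hroot : ∀ j : ℕ, P.eval ((j : F) * b) = 0 := by
    intro j
    have hp1 : 1 ≤ p := (Fact.out : p.Prime).one_lt.le
    have hbp : b ^ p = b ^ (p - 1) * b := by
      rw [← pow_succ, Nat.sub_add_cancel hp1]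
    simp only [hP, eval_sub, eval_pow, eval_X, eval_mul, eval_C]
    rw [mul_pow, aux_fermat_cast p, hbp]; ring
  have hdr : P.eval d = 0 := by
    simp only [hP, eval_sub, eval_pow, eval_X, eval_mul, eval_C, hd, sub_self]
  -- build injective map Fin (p+1) → F of roots
  set f : Fin (p + 1) → F := fun j => if h : (j : ℕ) < p then ((j : ℕ) : F) * b else d
    with hf
  have hfinj : Function.Injective f := by
    intro a c hac
    simp only [hf] at hac
    by_cases hA : (a : ℕ) < p <;> by_cases hC : (c : ℕ) < p
    · rw [dif_pos hA, dif_pos hC] at hac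
      have := mul_right_cancel₀ hb hac
      exact Fin.ext (aux_cast_inj p hA hC this)
    · rw [dif_pos hA, dif_neg hC] at hac
      exact absurd hac.symm (by simpa [nsmul_eq_mul] using hcon ⟨a, hA⟩)
    · rw [dif_neg hA, dif_pos hC] at hac
      exact absurd hac (by simpa [nsmul_eq_mul] using hcon ⟨c, hC⟩)
    · exact Fin.ext (by omega)
  have hzero : P = 0 := by
    apply Polynomial.eq_zero_of_natDegree_lt_card_of_eval_eq_zero P hfinj
    · intro j
      simp only [hf]
      by_cases hj : (j : ℕ) < p
      · rw [dif_pos hj]; exact hroot _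
      · rw [dif_neg hj]; exact hdr
    · rw [aux_natDegree p b, Fintype.card_fin]; omega
  exact aux_pi_ne_zero p b hzero

end Aux

/-- The punctured invariant subcode of the quasi-cyclic evaluation code (orbits
under `z ↦ z + b` in characteristic `p`) is the evaluation code on the support
`i ↦ (x i)^p - b^{p-1}·(x i)`. -/
theorem invariant_evaluation_code_translation {F : Type*} [Field F] (p : ℕ)
    [Fact p.Prime] [CharP F p] (b : F) (hb : b ≠ 0) (s t : ℕ) (hts : t < s)
    (x : Fin s → F)
    (hinj : Function.Injective
      fun pr : Fin s × Fin p => x pr.1 + (pr.2 : ℕ) • b) :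
    {v : Fin s → F | ∃ f : F[X], f.natDegree ≤ t * p ∧
        ∀ (i : Fin s) (j : Fin p), f.eval (x i + (j : ℕ) • b) = v i} =
      {v : Fin s → F | ∃ g : F[X], g.natDegree ≤ t ∧
        ∀ i : Fin s, v i = g.eval (x i ^ p - b ^ (p - 1) * x i)} := by
  have hp : 0 < p := (Fact.out : p.Prime).pos
  set π : F[X] := X ^ p - C (b ^ (p - 1)) * X with hπ
  have hπeval : ∀ z : F, π.eval z = z ^ p - b ^ (p - 1) * z := by
    intro z; simp [hπ]
  have hπinv : ∀ (z : F) (j : ℕ), π.eval (z + (j : ℕ) • b) = π.eval z := by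
    intro z j; rw [hπeval, hπeval]; exact aux_pow_eval p b z j
  set e : Fin s → F := fun i => x i ^ p - b ^ (p - 1) * x i with he
  have heinj : Function.Injective e := by
    intro i i' hii
    have hd : (x i - x i') ^ p = b ^ (p - 1) * (x i - x i') := by
      rw [sub_pow_char]
      simp only [he] at hii
      have : x i ^ p - x i' ^ p =
          (b ^ (p - 1) * x i) - (b ^ (p - 1) * x i') := by
        linear_combination hii
      rw [this]; ring
    obtain ⟨j, hj⟩ := aux_root p b hb hd
    have : x i + (0 : ℕ) • b = x i' + (j : ℕ) • b := by
      simp only [zero_smul, add_zero]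
      linear_combination hj
    have := hinj (a₁ := (i, 0)) (a₂ := (i', j)) this
    exact (Prod.mk.injEq _ _ _ _ ▸ this).1
  ext v
  simp only [Set.mem_setOf_eq]
  constructor
  · rintro ⟨f, hf, hv⟩
    classical
    set g : F[X] := Lagrange.interpolate Finset.univ e v with hg
    have heInjOn : Set.InjOn e ↑(Finset.univ : Finset (Fin s)) :=
      heinj.injOn
    have hgdeg : g.natDegree < s := by
      by_cases h0 : g = 0
      · rw [h0, natDegree_zero]; omega
      · have := Lagrange.degree_interpolate_lt v heInjOn
        rw [← hg, Finset.card_univ, Fintype.card_fin] at this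
        exact natDegree_lt_iff_degree_lt h0 |>.mpr (by exact_mod_cast this)
    have hgv : ∀ i : Fin s, g.eval (e i) = v i := fun i =>
      Lagrange.eval_interpolate_at_node v heInjOn (Finset.mem_univ i)
    have hfeq : f = g.comp π := by
      have hsub : f - g.comp π = 0 := by
        apply Polynomial.eq_zero_of_natDegree_lt_card_of_eval_eq_zero
          (f - g.comp π) hinj
        · rintro ⟨i, j⟩
          simp only [eval_sub, eval_comp]
          rw [hπinv (x i) j, hv i j]
          have : π.eval (x i) = e i := by rw [hπeval]
          rw [this, hgv i, sub_self]
        · have hcard : Fintype.card (Fin s × Fin p) = s * p := by simp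
          rw [hcard]
          have h1 : f.natDegree ≤ t * p := hf
          have hπdeg : π.natDegree = p := aux_natDegree p b
          have h2 : (g.comp π).natDegree = g.natDegree * p := by
            rw [natDegree_comp, hπdeg]
          have h3 : (g.comp π).natDegree < s * p := by
            rw [h2]; exact (Nat.mul_lt_mul_right hp).mpr hgdeg
          have h4 : f.natDegree < s * p :=
            lt_of_le_of_lt h1 ((Nat.mul_lt_mul_right hp).mpr hts)
          calc (f - g.comp π).natDegree
              ≤ max f.natDegree (g.comp π).natDegree := natDegree_sub_le _ _
            _ < s * p := max_lt h4 h3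
      exact sub_eq_zero.mp hsub
    refine ⟨g, ?_, fun i => (hgv i).symm⟩
    have hπdeg : π.natDegree = p := aux_natDegree p b
    have : g.natDegree * p ≤ t * p := by
      have h' := hf
      rw [hfeq, natDegree_comp, hπdeg] at h'
      exact h'
    exact Nat.le_of_mul_le_mul_right this hp
  · rintro ⟨g, hg, hv⟩
    refine ⟨g.comp π, ?_, ?_⟩
    · have hπdeg : π.natDegree = p := aux_natDegree p b
      rw [natDegree_comp, hπdeg]
      exact Nat.mul_le_mul_right p hg
    · intro i j
      rw [eval_comp, hπinv (x i) j, hπeval, hv i]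
end

section
/- Let F be a field of prime characteristic p, b ∈ F nonzero, s, t natural numbers with t < s, x : Fin s → F such that the map (i,j) ↦ (x i) + j·b from Fin s × Fin p to F is injective, and q ∈ F with (x i)^p − b^{p−1}·(x i) ≠ q^p − b^{p−1}·q for all i. Write N(z) := z^p − b^{p−1}·z. Then the following two subsets of (Fin s → F) are equal: { v | ∃ f ∈ F[X], natDegree(f) ≤ t·p and f(x i + j·b) / (N(x i) − N(q))^t = v i for all i ∈ Fin s, j ∈ Fin p } = { v | ∃ g ∈ F[X], natDegree(g) ≤ t and v i = g(N(x i)) / (N(x i) − N(q))^t for all i ∈ Fin s }. -/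
open Polynomial

section InvGRSAux

variable {F : Type*} [Field F] (p : ℕ) [hp : Fact p.Prime] [CharP F p] (b : F)

/-- The additive polynomial `N(X) = X^p - b^{p-1} X`. -/
noncomputable def invGRS_N (p : ℕ) (b : F) : F[X] := X ^ p - C (b ^ (p - 1)) * X

lemma invGRS_N_eval (z : F) :
    (invGRS_N p b).eval z = z ^ p - b ^ (p - 1) * z := by
  simp [invGRS_N]

lemma invGRS_N_natDegree : (invGRS_N p b).natDegree = p := by
  have hp1 : 1 < p := hp.out.one_lt
  unfold invGRS_N
  rw [natDegree_sub_eq_left_of_natDegree_lt, natDegree_X_pow]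
  rw [natDegree_X_pow]
  calc (C (b ^ (p - 1)) * X).natDegree ≤ (C (b ^ (p - 1))).natDegree + X.natDegree :=
        natDegree_mul_le
    _ ≤ 1 := by simp
    _ < p := hp1

lemma invGRS_N_monic : (invGRS_N p b).Monic := by
  have hp1 : 1 < p := hp.out.one_lt
  have h : (C (b ^ (p - 1)) * X).degree < (X ^ p : F[X]).degree := by
    calc (C (b ^ (p - 1)) * X).degree ≤ (C (b ^ (p - 1))).degree + X.degree :=
          degree_mul_le _ _
      _ ≤ 0 + 1 := add_le_add degree_C_le degree_X_le
      _ < (X ^ p : F[X]).degree := by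
          rw [degree_X_pow]
          norm_num
          exact_mod_cast hp1
  exact (monic_X_pow p).sub_of_left h

lemma invGRS_N_eval_add (z : F) (j : ℕ) :
    (invGRS_N p b).eval (z + j • b) = (invGRS_N p b).eval z := by
  have hp0 : 0 < p := hp.out.pos
  have hfrob : ((j : F)) ^ p = (j : F) := by
    have := map_natCast (frobenius F p) j
    rwa [frobenius_def] at this
  have hbp : b ^ p = b ^ (p - 1) * b := by
    rw [← pow_succ]
    congr 1
    omega
  rw [invGRS_N_eval, invGRS_N_eval, nsmul_eq_mul,
    add_pow_char z ((j : F) * b), mul_pow, hfrob, hbp]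
  ring

/-- Over an orbit with distinct points, `N - N(z)` factors into linear terms. -/
lemma invGRS_N_prod (z : F)
    (hdist : Function.Injective (fun j : Fin p => z + (j : ℕ) • b)) :
    invGRS_N p b - C ((invGRS_N p b).eval z)
      = ∏ j : Fin p, (X - C (z + (j : ℕ) • b)) := by
  have hp0 : 0 < p := hp.out.pos
  set L : F[X] := invGRS_N p b - C ((invGRS_N p b).eval z) with hL
  set R : F[X] := ∏ j : Fin p, (X - C (z + (j : ℕ) • b)) with hR
  have hLmonic : L.Monic := by
    apply (invGRS_N_monic p b).sub_of_left
    calc (C ((invGRS_N p b).eval z)).degree ≤ 0 := degree_C_le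
      _ < (invGRS_N p b).degree := by
          rw [degree_eq_natDegree (invGRS_N_monic p b).ne_zero, invGRS_N_natDegree]
          exact_mod_cast hp0
  have hRmonic : R.Monic := monic_prod_of_monic _ _ fun j _ => monic_X_sub_C _
  have hLdeg : L.natDegree = p := by
    rw [hL]
    rw [natDegree_sub_eq_left_of_natDegree_lt, invGRS_N_natDegree]
    rw [invGRS_N_natDegree]
    calc (C ((invGRS_N p b).eval z)).natDegree = 0 := natDegree_C _
      _ < p := hp0
  have hRdeg : R.natDegree = p := by
    rw [hR, natDegree_prod_of_monic _ _ fun j _ => monic_X_sub_C _]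
    simp only [natDegree_X_sub_C, Finset.sum_const, Finset.card_univ, Fintype.card_fin,
      smul_eq_mul, mul_one]
  have heval : ∀ j : Fin p, (L - R).eval (z + (j : ℕ) • b) = 0 := by
    intro j
    have hLe : L.eval (z + (j : ℕ) • b) = 0 := by
      rw [hL, eval_sub, eval_C, invGRS_N_eval_add, sub_self]
    have hRe : R.eval (z + (j : ℕ) • b) = 0 := by
      rw [hR, eval_prod]
      apply Finset.prod_eq_zero (Finset.mem_univ j)
      simp
    rw [eval_sub, hLe, hRe, sub_self]
  have hdeg : (L - R).natDegree < p := by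
    rcases eq_or_ne (L - R) 0 with h | h
    · simpa [h] using hp0
    · rw [natDegree_lt_iff_degree_lt h]
      calc (L - R).degree < L.degree := by
            apply degree_sub_lt _ hLmonic.ne_zero
            · rw [hLmonic.leadingCoeff, hRmonic.leadingCoeff]
            · rw [degree_eq_natDegree hLmonic.ne_zero, degree_eq_natDegree hRmonic.ne_zero, hLdeg, hRdeg]
        _ = (p : WithBot ℕ) := by rw [degree_eq_natDegree hLmonic.ne_zero, hLdeg]
  rw [← sub_eq_zero]
  exact eq_zero_of_natDegree_lt_card_of_eval_eq_zero _ hdist heval (by simpa using hdeg)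

end InvGRSAux

/-- The punctured invariant subcode of the quasi-cyclic GRS code (orbits under
`z ↦ z + b` in characteristic `p`, divisor on the orbit of `q`) is the GRS code
with support `i ↦ N(x i)` and multiplier `i ↦ (N(x i) - N(q))⁻ᵗ`, where
`N(z) = z^p - b^{p-1}·z`. -/
theorem invariant_GRS_code_translation {F : Type*} [Field F] (p : ℕ)
    [Fact p.Prime] [CharP F p] (b : F) (hb : b ≠ 0) (s t : ℕ) (hts : t < s)
    (x : Fin s → F)
    (hinj : Function.Injective
      fun pr : Fin s × Fin p => x pr.1 + (pr.2 : ℕ) • b)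
    (q : F)
    (hq : ∀ i : Fin s,
      x i ^ p - b ^ (p - 1) * x i ≠ q ^ p - b ^ (p - 1) * q) :
    {v : Fin s → F | ∃ f : F[X], f.natDegree ≤ t * p ∧
        ∀ (i : Fin s) (j : Fin p),
          f.eval (x i + (j : ℕ) • b) /
            ((x i ^ p - b ^ (p - 1) * x i) - (q ^ p - b ^ (p - 1) * q)) ^ t
            = v i} =
      {v : Fin s → F | ∃ g : F[X], g.natDegree ≤ t ∧
        ∀ i : Fin s, v i = g.eval (x i ^ p - b ^ (p - 1) * x i) /
          ((x i ^ p - b ^ (p - 1) * x i) - (q ^ p - b ^ (p - 1) * q)) ^ t} := by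
  have hp : p.Prime := Fact.out
  have hp0 : 0 < p := hp.pos
  have hs0 : 0 < s := lt_of_le_of_lt (Nat.zero_le t) hts
  set N : F[X] := invGRS_N p b with hN
  set e : Fin s → F := fun i => x i ^ p - b ^ (p - 1) * x i with he
  have heN : ∀ i, N.eval (x i) = e i := fun i => invGRS_N_eval p b (x i)
  set d : Fin s → F := fun i => e i - (q ^ p - b ^ (p - 1) * q) with hd
  have hd0 : ∀ i, d i ≠ 0 := fun i => sub_ne_zero.mpr (hq i)
  have hdt0 : ∀ i, d i ^ t ≠ 0 := fun i => pow_ne_zero _ (hd0 i)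
  -- distinctness within each orbit
  have hdist : ∀ i : Fin s, Function.Injective (fun j : Fin p => x i + (j : ℕ) • b) := by
    intro i j1 j2 h
    have : (⟨i, j1⟩ : Fin s × Fin p) = ⟨i, j2⟩ := hinj h
    exact (Prod.mk.injEq _ _ _ _ ▸ this).2
  -- orbit invariance of N
  have horb : ∀ (i : Fin s) (j : ℕ), N.eval (x i + j • b) = e i := by
    intro i j
    rw [hN, invGRS_N_eval_add, ← heN]
  -- injectivity of e
  have he_inj : Function.Injective e := by
    intro i k hik
    have hprod := invGRS_N_prod p b (x k) (hdist k)
    have hroot : (invGRS_N p b - C ((invGRS_N p b).eval (x k))).eval (x i) = 0 := by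
      rw [eval_sub, eval_C]
      show N.eval (x i) - N.eval (x k) = 0
      rw [heN, heN, hik, sub_self]
    rw [hprod, eval_prod, Finset.prod_eq_zero_iff] at hroot
    obtain ⟨j, -, hj⟩ := hroot
    rw [eval_sub, eval_X, eval_C, sub_eq_zero] at hj
    have : (⟨i, (0 : Fin p)⟩ : Fin s × Fin p) = ⟨k, j⟩ := by
      apply hinj
      simpa using hj
    exact (Prod.mk.injEq _ _ _ _ ▸ this).1
  ext v
  simp only [Set.mem_setOf_eq]
  constructor
  · -- hard direction
    rintro ⟨f, hfdeg, hfe⟩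
    set w : Fin s → F := fun i => v i * d i ^ t with hw
    have hfew : ∀ (i : Fin s) (j : Fin p), f.eval (x i + (j : ℕ) • b) = w i := by
      intro i j
      have := hfe i j
      rw [div_eq_iff (hdt0 i)] at this
      exact this
    set g : F[X] := Lagrange.interpolate Finset.univ e w with hg
    have he_injOn : Set.InjOn e (Finset.univ : Finset (Fin s)) := he_inj.injOn
    have hgdeg : g.degree < s := by
      have := Lagrange.degree_interpolate_lt w he_injOn
      simpa [hg] using this
    have hgnat : g.natDegree < s := by
      rcases eq_or_ne g 0 with h | h
      · simpa [h] using hs0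
      · exact (natDegree_lt_iff_degree_lt h).mpr (by exact_mod_cast hgdeg)
    have hgeval : ∀ i : Fin s, g.eval (e i) = w i := fun i =>
      Lagrange.eval_interpolate_at_node w he_injOn (Finset.mem_univ i)
    -- each factor divides f - g.comp N
    have hfac : ∀ i : Fin s, (N - C (e i)) ∣ (f - g.comp N) := by
      intro i
      have h1 : (N - C (e i)) ∣ (f - C (w i)) := by
        rw [show N - C (e i) = ∏ j : Fin p, (X - C (x i + (j : ℕ) • b)) from by
          rw [hN, ← heN i]; exact invGRS_N_prod p b (x i) (hdist i)]
        apply Finset.prod_dvd_of_coprime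
        · intro j1 _ j2 hj2 hne
          exact pairwise_coprime_X_sub_C (hdist i) hne
        · intro j _
          rw [dvd_iff_isRoot, IsRoot, eval_sub, eval_C, hfew i j, sub_self]
      have h2 : (N - C (e i)) ∣ (g.comp N - C (w i)) := by
        obtain ⟨k, hk⟩ := X_sub_C_dvd_sub_C_eval (a := e i) (p := g)
        refine ⟨k.comp N, ?_⟩
        have := congrArg (fun r : F[X] => r.comp N) hk
        simpa [sub_comp, mul_comp, X_comp, C_comp, hgeval i] using this
      have := dvd_sub h1 h2
      simpa using this
    -- coprimality of the factors
    have hcop : ((Finset.univ : Finset (Fin s)) : Set (Fin s)).Pairwise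
        (Function.onFun IsCoprime fun i => N - C (e i)) := by
      intro i _ k _ hik
      have hcXC : IsCoprime (X - C (e i)) (X - C (e k)) :=
        pairwise_coprime_X_sub_C he_inj hik
      have := hcXC.map (aeval N).toRingHom
      simpa [map_sub, aeval_X, aeval_C, algebraMap_eq] using this
    have hDdvd : (∏ i : Fin s, (N - C (e i))) ∣ (f - g.comp N) :=
      Finset.prod_dvd_of_coprime hcop fun i _ => hfac i
    -- degrees
    have hfacmonic : ∀ i : Fin s, (N - C (e i)).Monic := by
      intro i
      apply (invGRS_N_monic p b).sub_of_left
      calc (C (e i)).degree ≤ 0 := degree_C_le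
        _ < (invGRS_N p b).degree := by
            rw [degree_eq_natDegree (invGRS_N_monic p b).ne_zero, invGRS_N_natDegree]
            exact_mod_cast hp0
    have hfacdeg : ∀ i : Fin s, (N - C (e i)).natDegree = p := by
      intro i
      rw [natDegree_sub_eq_left_of_natDegree_lt]
      · exact invGRS_N_natDegree p b
      · rw [invGRS_N_natDegree]
        calc (C (e i)).natDegree = 0 := natDegree_C _
          _ < p := hp0
    have hDdeg : (∏ i : Fin s, (N - C (e i))).natDegree = s * p := by
      rw [natDegree_prod_of_monic _ _ fun i _ => hfacmonic i]
      simp [hfacdeg, Finset.sum_const, mul_comm]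
    have hNdeg : N.natDegree = p := invGRS_N_natDegree p b
    have hcompdeg : (g.comp N).natDegree < s * p := by
      rw [natDegree_comp, hNdeg]
      exact (Nat.mul_lt_mul_right hp0).mpr hgnat
    have hfdeg' : f.natDegree < s * p :=
      lt_of_le_of_lt hfdeg ((Nat.mul_lt_mul_right hp0).mpr hts)
    have hdiffdeg : (f - g.comp N).natDegree < s * p :=
      lt_of_le_of_lt (natDegree_sub_le _ _) (max_lt hfdeg' hcompdeg)
    have hfg : f = g.comp N := by
      by_contra h
      have hne : f - g.comp N ≠ 0 := sub_ne_zero.mpr h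
      have := natDegree_le_of_dvd hDdvd hne
      rw [hDdeg] at this
      omega
    have hgt : g.natDegree ≤ t := by
      rcases eq_or_ne g 0 with h | h
      · simp [h]
      · have : g.natDegree * p ≤ t * p := by
          have h1 := hfdeg
          rw [hfg, natDegree_comp, hNdeg] at h1
          exact h1
        exact Nat.le_of_mul_le_mul_right this hp0
    refine ⟨g, hgt, fun i => ?_⟩
    have h0 := hfe i 0
    have hx0 : x i + ((0 : Fin p) : ℕ) • b = x i := by simp
    rw [hx0] at h0
    have hfx : f.eval (x i) = g.eval (e i) := by
      rw [hfg, eval_comp, heN]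
    rw [← h0, hfx]
  · -- easy direction
    rintro ⟨g, hgdeg, hg⟩
    refine ⟨g.comp N, ?_, fun i j => ?_⟩
    · rw [natDegree_comp, invGRS_N_natDegree]
      exact Nat.mul_le_mul_right p hgdeg
    · rw [eval_comp, horb i j, ← hg i]
end

section
/- Let F be a field, a ∈ F an element of multiplicative order ℓ (a^ℓ = 1 and a^j ≠ 1 for all 0 < j < ℓ), s, t natural numbers with t < s, and x : Fin s → F such that the map (i,j) ↦ a^j · (x i) from Fin s × Fin ℓ to F is injective. Then the F-linear subspace of (Fin s → F) given by the range of the linear map sending a polynomial g of degree < t + 1 (i.e. g ∈ Polynomial.degreeLT F (t+1)) to the vector (g((x i)^ℓ))_{i ∈ Fin s} has dimension (finrank) exactly t + 1. In particular, the punctured invariant code of the quasi-cyclic evaluation code of dimension t·ℓ + 1 is a GRS code of length s = n/ℓ and dimension t + 1. -/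
/-!
The evaluation points `(x i)^ℓ` are pairwise distinct: if `(x i)^ℓ = (x i')^ℓ`, then
`x i = a^j · x i'` for some `j < ℓ`, because the `ℓ`-th roots of unity are exactly the powers
of the primitive root `a`, and the injectivity of the orbit map forces `i = i'`. A polynomial of
degree `≤ t < s` vanishing at `s` distinct points is zero, so the evaluation map is injective on
`degreeLT F (t + 1)`, whose dimension is `t + 1`.
-/

open Polynomial

theorem IsPrimitiveRoot.exists_pow_mul_eq_of_pow_eq_pow {F : Type*} [Field F] {ζ : F} {ℓ : ℕ}
    (hζ : IsPrimitiveRoot ζ ℓ) (hℓ : 0 < ℓ) {y z : F} (h : y ^ ℓ = z ^ ℓ) :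
    ∃ j < ℓ, ζ ^ j * z = y := by
  have : NeZero ℓ := ⟨hℓ.ne'⟩
  by_cases hz : z = 0
  · subst hz
    exact ⟨0, hℓ, by rw [zero_pow hℓ.ne', pow_eq_zero_iff hℓ.ne'] at h; simp [h]⟩
  · obtain ⟨j, hj, hζj⟩ := hζ.eq_pow_of_pow_eq_one (ξ := y / z)
      (by rw [div_pow, h, div_self (pow_ne_zero _ hz)])
    exact ⟨j, hj, by rw [hζj, div_mul_cancel₀ _ hz]⟩

theorem IsPrimitiveRoot.injective_pow_of_injective_pow_mul {F ι : Type*} [Field F] {ζ : F}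
    {ℓ : ℕ} (hζ : IsPrimitiveRoot ζ ℓ) (hℓ : 0 < ℓ) {x : ι → F}
    (hinj : Function.Injective fun p : ι × Fin ℓ => ζ ^ (p.2 : ℕ) * x p.1) :
    Function.Injective fun i => x i ^ ℓ := by
  intro i i' h
  obtain ⟨j, hj, hζj⟩ := hζ.exists_pow_mul_eq_of_pow_eq_pow hℓ h
  have := @hinj (i', ⟨j, hj⟩) (i, ⟨0, hℓ⟩) (by simpa using hζj)
  exact (Prod.ext_iff.mp this).1.symm

theorem Polynomial.injective_pi_leval_comp_degreeLT_subtype {R ι : Type*} [CommRing R]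
    [IsDomain R] [Fintype ι] {v : ι → R} (hv : Function.Injective v) {n : ℕ}
    (hn : n ≤ Fintype.card ι) :
    Function.Injective
      ((LinearMap.pi fun i => leval (v i)).comp (degreeLT R n).subtype) := by
  rw [← LinearMap.ker_eq_bot, LinearMap.ker_eq_bot']
  rintro ⟨g, hg⟩ hg0
  have hdeg : g.degree < Finset.univ.card (α := ι) :=
    (mem_degreeLT.mp hg).trans_le (by exact_mod_cast hn)
  exact Subtype.ext
    (eq_zero_of_degree_lt_of_eval_index_eq_zero _ hv.injOn hdeg fun i _ => congrFun hg0 i)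

/-- The punctured invariant code of the quasi-cyclic evaluation code of
dimension `t·ℓ + 1` is a GRS (evaluation) code of length `s = n/ℓ` and
dimension `t + 1`: the evaluation map on polynomials of degree `< t + 1` at the
points `(x i)^ℓ` has range of dimension exactly `t + 1`. -/
theorem invariant_code_finrank_homothety {F : Type*} [Field F] (a : F)
    (ℓ : ℕ) (hℓ : 0 < ℓ) (ha1 : a ^ ℓ = 1)
    (ha2 : ∀ j : ℕ, 0 < j → j < ℓ → a ^ j ≠ 1) (s t : ℕ) (hts : t < s)
    (x : Fin s → F)
    (hinj : Function.Injective fun p : Fin s × Fin ℓ => a ^ (p.2 : ℕ) * x p.1) :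
    Module.finrank F (LinearMap.range
      ((LinearMap.pi fun i : Fin s => Polynomial.leval (x i ^ ℓ)).comp
        (Polynomial.degreeLT F (t + 1)).subtype)) = t + 1 := by
  have hpoints :=
    (IsPrimitiveRoot.mk_of_lt a hℓ ha1 ha2).injective_pow_of_injective_pow_mul hℓ hinj
  rw [LinearMap.finrank_range_of_inj
      (injective_pi_leval_comp_degreeLT_subtype hpoints (by simpa using hts)),
    Module.finrank_eq_card_basis (degreeLT.basis F (t + 1)), Fintype.card_fin]
end
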